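/- Let n ≥ 5. For any two disjoint connected dominating sets D_1 and D_2 of the graph P_n^*, one has ||D_1| − |D_2|| ≥ n − 5. -/

import Mathlib

/-!
Since the two sets are disjoint, one of them, say `D₁`, avoids the apex `u`. A connected set avoiding
`u` spans a subpath, and as it must dominate both ends `p₁` and `pₙ` it contains `p₂, …, pₙ₋₁`.
Hence `|D₁| ≥ n - 2`, while `|D₁| + |D₂| ≤ n + 1`, so `|D₁| - |D₂| ≥ 2(n - 2) - (n + 1) = n - 5`.
-/

open SimpleGraph

variable {V : Type*}

/-- `T` is a spanning tree of `G`: a subgraph on all of `V` that is connected and acyclic. -/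
def IsSpanningTree (G T : SimpleGraph V) : Prop :=
  T ≤ G ∧ T.Connected ∧ T.IsAcyclic

/-- The set of inner vertices of `T` (degree at least 2). -/
def innerSet (T : SimpleGraph V) : Set V :=
  {v | 2 ≤ (T.neighborSet v).ncard}

/-- Vertices that are inner vertices of at least two trees of the family. -/
def innerMulti {k : ℕ} (T : Fin k → SimpleGraph V) : Set V :=
  {v | ∃ i j : Fin k, i ≠ j ∧ v ∈ innerSet (T i) ∧ v ∈ innerSet (T j)}

/-- Edges that belong to at least two trees of the family. -/
def edgeMulti {k : ℕ} (T : Fin k → SimpleGraph V) : Set (Sym2 V) :=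
  {e | ∃ i j : Fin k, i ≠ j ∧ e ∈ (T i).edgeSet ∧ e ∈ (T j).edgeSet}

/-- A connected dominating set. -/
def IsConnDomSet (G : SimpleGraph V) (D : Set V) : Prop :=
  (G.induce D).Connected ∧ ∀ v ∉ D, ∃ w ∈ D, G.Adj v w

/-- The graph `Pₙ*`: a path on `n` vertices together with a universal extra
vertex `Sum.inr ()` adjacent to every path vertex. -/
def pathStar (n : ℕ) : SimpleGraph (Fin n ⊕ Unit) :=
  SimpleGraph.fromRel (fun x y =>
    match x, y with
    | Sum.inl a, Sum.inl b => a.1 + 1 = b.1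
    | Sum.inl _, Sum.inr _ => True
    | _, _ => False)

lemma pathStar_adj_inl_inl {n : ℕ} (a b : Fin n) :
    (pathStar n).Adj (Sum.inl a) (Sum.inl b) ↔ a.1 + 1 = b.1 ∨ b.1 + 1 = a.1 := by
  simp only [pathStar, fromRel_adj, ne_eq, Sum.inl.injEq, and_iff_right_iff_imp]
  omega

/-- A walk inside `D` from below `c` to `c` or above crosses the edge entering `c`. -/
lemma pathStar_inl_mem_of_preconnected {n : ℕ} {D : Set (Fin n ⊕ Unit)}
    (hD : ((pathStar n).induce D).Preconnected) (hu : Sum.inr () ∉ D) {a b c : Fin n}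
    (ha : Sum.inl a ∈ D) (hb : Sum.inl b ∈ D) (hac : a ≤ c) (hcb : c ≤ b) :
    Sum.inl c ∈ D := by
  obtain rfl | hac := hac.eq_or_lt
  · exact ha
  let below : Set D := {x | ∃ i < c, x.1 = Sum.inl i}
  obtain ⟨w⟩ := hD ⟨_, ha⟩ ⟨_, hb⟩
  obtain ⟨d, -, ⟨i, hic, hi⟩, hnot⟩ :=
    w.exists_boundary_dart below ⟨a, hac, rfl⟩ fun ⟨j, hjc, hj⟩ ↦
      (Sum.inl_injective hj ▸ hjc).not_ge hcb
  obtain ⟨⟨⟨x, hx⟩, ⟨y, hy⟩⟩, hxy⟩ := d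
  obtain ⟨j, rfl⟩ : ∃ j, y = Sum.inl j := by
    rcases y with j | ⟨⟩
    · exact ⟨j, rfl⟩
    · exact absurd hy hu
  subst hi
  have hadj : (pathStar n).Adj (Sum.inl i) (Sum.inl j) := hxy
  rw [pathStar_adj_inl_inl] at hadj
  have hjc : ¬ j < c := fun h ↦ hnot ⟨j, h, rfl⟩
  rw [Fin.lt_def] at hic hjc
  obtain rfl : j = c := Fin.ext (by omega)
  exact hy

lemma pathStar_exists_inl_mem_near {n : ℕ} {D : Set (Fin n ⊕ Unit)}
    (hD : IsConnDomSet (pathStar n) D) (hu : Sum.inr () ∉ D) (i : Fin n) :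
    ∃ j : Fin n, Sum.inl j ∈ D ∧ j.1 ≤ i.1 + 1 ∧ i.1 ≤ j.1 + 1 := by
  by_cases hi : Sum.inl i ∈ D
  · exact ⟨i, hi, by omega, by omega⟩
  obtain ⟨w, hw, hadj⟩ := hD.2 _ hi
  rcases w with j | ⟨⟩
  · rw [pathStar_adj_inl_inl] at hadj
    exact ⟨j, hw, by omega, by omega⟩
  · exact absurd hw hu

lemma pathStar_inl_mem_of_isConnDomSet {n : ℕ} {D : Set (Fin n ⊕ Unit)}
    (hD : IsConnDomSet (pathStar n) D) (hu : Sum.inr () ∉ D) (c : Fin n)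
    (hc₀ : 0 < c.1) (hc₁ : c.1 + 1 < n) : Sum.inl c ∈ D := by
  obtain ⟨a, ha, ha₁, -⟩ := pathStar_exists_inl_mem_near hD hu ⟨0, by omega⟩
  obtain ⟨b, hb, -, hb₁⟩ := pathStar_exists_inl_mem_near hD hu ⟨n - 1, by omega⟩
  simp only [zero_add] at ha₁
  simp only [tsub_le_iff_right] at hb₁
  exact pathStar_inl_mem_of_preconnected hD.1.preconnected hu ha hb
    (Fin.le_def.2 (by omega)) (Fin.le_def.2 (by omega))

lemma pathStar_sub_two_le_ncard {n : ℕ} {D : Set (Fin n ⊕ Unit)}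
    (hD : IsConnDomSet (pathStar n) D) (hu : Sum.inr () ∉ D) : n - 2 ≤ D.ncard := by
  let inner : Fin (n - 2) → Fin n ⊕ Unit := fun i ↦ Sum.inl ⟨i.1 + 1, by omega⟩
  have h := Set.ncard_le_ncard_of_injOn inner (s := Set.univ)
    (fun i _ ↦ pathStar_inl_mem_of_isConnDomSet hD hu _ (Nat.succ_pos _) (by dsimp only; omega))
    (fun i _ j _ h ↦ Fin.ext (by simpa [inner] using h))
  simpa using h

lemma pathStar_sub_five_le_ncard_sub_ncard {n : ℕ} {D₁ D₂ : Set (Fin n ⊕ Unit)}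
    (h₁ : IsConnDomSet (pathStar n) D₁) (hu : Sum.inr () ∉ D₁) (hd : Disjoint D₁ D₂) :
    (n : ℤ) - 5 ≤ (D₁.ncard : ℤ) - (D₂.ncard : ℤ) := by
  have hD₁ := pathStar_sub_two_le_ncard h₁ hu
  have htotal : D₁.ncard + D₂.ncard ≤ n + 1 := by
    rw [← Set.ncard_union_eq hd]
    simpa using Set.ncard_le_ncard (Set.subset_univ (D₁ ∪ D₂))
  omega

theorem pathStar_unbalanced_cds_general (n : ℕ)
    (D₁ D₂ : Set (Fin n ⊕ Unit))
    (h₁ : IsConnDomSet (pathStar n) D₁) (h₂ : IsConnDomSet (pathStar n) D₂)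
    (hd : Disjoint D₁ D₂) :
    (n : ℤ) - 5 ≤ |(D₁.ncard : ℤ) - (D₂.ncard : ℤ)| := by
  by_cases hu : Sum.inr () ∈ D₁
  · have hu₂ : Sum.inr () ∉ D₂ := hd.notMem_of_mem_left hu
    rw [abs_sub_comm]
    exact (pathStar_sub_five_le_ncard_sub_ncard h₂ hu₂ hd.symm).trans (le_abs_self _)
  · exact (pathStar_sub_five_le_ncard_sub_ncard h₁ hu hd).trans (le_abs_self _)

/-- Any two disjoint connected dominating sets of `Pₙ*` (n ≥ 5) have sizes differing
by at least `n - 5`. -/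
theorem pathStar_unbalanced_cds (n : ℕ) (hn : 5 ≤ n)
    (D₁ D₂ : Set (Fin n ⊕ Unit))
    (h₁ : IsConnDomSet (pathStar n) D₁) (h₂ : IsConnDomSet (pathStar n) D₂)
    (hd : Disjoint D₁ D₂) :
    (n : ℤ) - 5 ≤ |(D₁.ncard : ℤ) - (D₂.ncard : ℤ)| :=
  pathStar_unbalanced_cds_general n D₁ D₂ h₁ h₂ hd
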